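/- Let f : ℝⁿ → ℝ be differentiable with L-Lipschitz gradient. Then for every x and ε ≥ 0, the supremum of |f(x+δ) − f(x)| over ‖δ‖_∞ ≤ ε satisfies ε‖∇f(x)‖₁ − (L/2)nε² ≤ sup ≤ ε‖∇f(x)‖₁ + (L/2)nε². -/

import Mathlib

/-!
Along the segment `t ↦ x + t • δ`, the gap between `f` and its linearization at `x` has derivative
`⟪∇f (x + t • δ) - ∇f x, δ⟫`, bounded by `L t ‖δ‖²`; comparing with `L t² ‖δ‖² / 2` gives the
second-order Taylor bound `|f (x + δ) - f x - ⟪∇f x, δ⟫| ≤ (L/2) ‖δ‖² ≤ (L/2) n ε²` on the box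
`‖δ‖_∞ ≤ ε`. On that box `|⟪∇f x, δ⟫| ≤ ε ‖∇f x‖₁` by Hölder, with equality at
`δ = ε • sign (∇f x)`, which yields both bounds on the supremum.
-/

open scoped RealInnerProductSpace

namespace Real

theorem abs_sign_le_one (r : ℝ) : |sign r| ≤ 1 := by
  rcases sign_apply_eq r with h | h | h <;> simp [h]

theorem sign_mul_self (r : ℝ) : sign r * r = |r| := by
  rcases lt_trichotomy r 0 with h | rfl | h
  · rw [sign_of_neg h, abs_of_neg h, neg_one_mul]
  · simp
  · rw [sign_of_pos h, abs_of_pos h, one_mul]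

end Real

theorem nonneg_of_norm_sub_le_mul_norm_sub {E F : Type*} [NormedAddCommGroup E] [Nontrivial E]
    [SeminormedAddCommGroup F] {g : E → F} {L : ℝ} (h : ∀ x y, ‖g x - g y‖ ≤ L * ‖x - y‖) :
    0 ≤ L := by
  obtain ⟨x, hx⟩ := exists_ne (0 : E)
  have hL : 0 ≤ L * ‖x - 0‖ := (norm_nonneg _).trans (h x 0)
  exact nonneg_of_mul_nonneg_left hL (by simpa using hx)

section Descent

variable {E : Type*} [NormedAddCommGroup E] [InnerProductSpace ℝ E] [CompleteSpace E]
  {f : E → ℝ} {L : ℝ}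

theorem abs_sub_sub_inner_gradient_le (hf : Differentiable ℝ f)
    (hL : ∀ x y, ‖gradient f x - gradient f y‖ ≤ L * ‖x - y‖) (x δ : E) :
    |f (x + δ) - f x - ⟪gradient f x, δ⟫| ≤ L / 2 * ‖δ‖ ^ 2 := by
  set φ : ℝ → ℝ := fun t => f (x + t • δ) - f x - t * ⟪gradient f x, δ⟫
  have hφ : ∀ t, HasDerivAt φ ⟪gradient f (x + t • δ) - gradient f x, δ⟫ t := by
    intro t
    have hline : HasDerivAt (fun t : ℝ => x + t • δ) δ t := by
      simpa using ((hasDerivAt_id t).smul_const δ).const_add x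
    have hcomp := ((hf _).hasGradientAt.hasFDerivAt.comp_hasDerivAt t hline).sub_const (f x)
    refine (hcomp.sub ((hasDerivAt_id t).mul_const ⟪gradient f x, δ⟫)).congr_deriv ?_
    simp [inner_sub_left]
  have hB : ∀ t, HasDerivAt (fun t => L / 2 * ‖δ‖ ^ 2 * t ^ 2) (L * ‖δ‖ ^ 2 * t) t := by
    intro t
    refine ((hasDerivAt_pow 2 t).const_mul (L / 2 * ‖δ‖ ^ 2)).congr_deriv ?_
    norm_num
    ring
  have bound : ∀ t ∈ Set.Ico (0 : ℝ) 1,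
      ‖⟪gradient f (x + t • δ) - gradient f x, δ⟫‖ ≤ L * ‖δ‖ ^ 2 * t := by
    rintro t ⟨ht, -⟩
    calc ‖⟪gradient f (x + t • δ) - gradient f x, δ⟫‖
        ≤ ‖gradient f (x + t • δ) - gradient f x‖ * ‖δ‖ := norm_inner_le_norm _ _
      _ ≤ L * ‖x + t • δ - x‖ * ‖δ‖ := by gcongr; exact hL _ _
      _ = L * ‖δ‖ ^ 2 * t := by
        rw [add_sub_cancel_left, norm_smul, Real.norm_of_nonneg ht]; ring
  have h := image_norm_le_of_norm_deriv_right_le_deriv_boundary (a := 0) (b := 1)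
    (fun t _ => (hφ t).continuousAt.continuousWithinAt) (fun t _ => (hφ t).hasDerivWithinAt)
    (by simp [φ]) hB bound (Set.right_mem_Icc.2 zero_le_one)
  simpa [φ] using h

end Descent

namespace EuclideanSpace

variable {ι : Type*} {ε : ℝ}

noncomputable def signVector (g : EuclideanSpace ℝ ι) : EuclideanSpace ℝ ι :=
  WithLp.toLp 2 fun i => Real.sign (g i)

theorem abs_smul_signVector_apply_le (g : EuclideanSpace ℝ ι) (hε : 0 ≤ ε) (i : ι) :
    |(ε • signVector g) i| ≤ ε := by
  simpa [signVector, abs_mul, abs_of_nonneg hε] using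
    mul_le_mul_of_nonneg_left (Real.abs_sign_le_one (g i)) hε

variable [Fintype ι]

theorem inner_signVector (g : EuclideanSpace ℝ ι) : ⟪g, signVector g⟫ = ∑ i, |g i| := by
  simp [signVector, PiLp.inner_apply, Real.sign_mul_self]

theorem abs_inner_le_mul_sum_abs {g δ : EuclideanSpace ℝ ι} (hδ : ∀ i, |δ i| ≤ ε) :
    |⟪g, δ⟫| ≤ ε * ∑ i, |g i| := by
  rw [PiLp.inner_apply, Finset.mul_sum]
  refine (Finset.abs_sum_le_sum_abs _ _).trans (Finset.sum_le_sum fun i _ => ?_)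
  simpa [abs_mul, mul_comm] using mul_le_mul_of_nonneg_left (hδ i) (abs_nonneg (g i))

theorem norm_sq_le_card_mul_sq {δ : EuclideanSpace ℝ ι} (hδ : ∀ i, |δ i| ≤ ε) :
    ‖δ‖ ^ 2 ≤ Fintype.card ι * ε ^ 2 := by
  rw [EuclideanSpace.norm_sq_eq]
  calc ∑ i, ‖δ i‖ ^ 2 ≤ ∑ _i : ι, ε ^ 2 :=
        Finset.sum_le_sum fun i _ => pow_le_pow_left₀ (norm_nonneg _) (hδ i) 2
    _ = Fintype.card ι * ε ^ 2 := by simp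

theorem abs_sub_sub_inner_gradient_le_of_abs_le {f : EuclideanSpace ℝ ι → ℝ} {L : ℝ}
    (hf : Differentiable ℝ f)
    (hL : ∀ x y : EuclideanSpace ℝ ι, ‖gradient f x - gradient f y‖ ≤ L * ‖x - y‖)
    (x : EuclideanSpace ℝ ι) {δ : EuclideanSpace ℝ ι} (hδ : ∀ i, |δ i| ≤ ε) :
    |f (x + δ) - f x - ⟪gradient f x, δ⟫| ≤ L / 2 * Fintype.card ι * ε ^ 2 := by
  refine (abs_sub_sub_inner_gradient_le hf hL x δ).trans ?_
  cases isEmpty_or_nonempty ι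
  · simp [Subsingleton.elim δ 0]
  · have hL0 := nonneg_of_norm_sub_le_mul_norm_sub hL
    rw [mul_assoc]
    gcongr
    exact norm_sq_le_card_mul_sq hδ

end EuclideanSpace

open EuclideanSpace in
/-- For `f` differentiable with `L`-Lipschitz gradient, the supremum of
`|f (x+δ) - f x|` over `‖δ‖_∞ ≤ ε` lies between `ε‖∇f x‖₁ - (L/2) n ε²` and
`ε‖∇f x‖₁ + (L/2) n ε²`. -/
theorem sup_change_approx (n : ℕ) (f : EuclideanSpace ℝ (Fin n) → ℝ) (L : ℝ)
    (hf : Differentiable ℝ f)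
    (hL : ∀ x y : EuclideanSpace ℝ (Fin n), ‖gradient f x - gradient f y‖ ≤ L * ‖x - y‖)
    (x : EuclideanSpace ℝ (Fin n)) (ε : ℝ) (hε : 0 ≤ ε) :
    ε * (∑ i, |gradient f x i|) - L / 2 * n * ε ^ 2 ≤
      sSup {y : ℝ | ∃ δ : EuclideanSpace ℝ (Fin n),
        (∀ i, |δ i| ≤ ε) ∧ y = |f (x + δ) - f x|} ∧
    sSup {y : ℝ | ∃ δ : EuclideanSpace ℝ (Fin n),
        (∀ i, |δ i| ≤ ε) ∧ y = |f (x + δ) - f x|} ≤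
      ε * (∑ i, |gradient f x i|) + L / 2 * n * ε ^ 2 := by
  have taylor {δ : EuclideanSpace ℝ (Fin n)} (hδ : ∀ i, |δ i| ≤ ε) :=
    Fintype.card_fin n ▸ abs_sub_sub_inner_gradient_le_of_abs_le hf hL x hδ
  have upper : ∀ y ∈ {y : ℝ | ∃ δ : EuclideanSpace ℝ (Fin n),
      (∀ i, |δ i| ≤ ε) ∧ y = |f (x + δ) - f x|},
      y ≤ ε * (∑ i, |gradient f x i|) + L / 2 * n * ε ^ 2 := by
    rintro _ ⟨δ, hδ, rfl⟩
    have h1 := abs_le.1 (taylor hδ)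
    have h2 := abs_le.1 (abs_inner_le_mul_sum_abs (g := gradient f x) hδ)
    exact abs_le.2 ⟨by linarith, by linarith⟩
  set δ₀ := ε • signVector (gradient f x)
  have hδ₀ : ∀ i, |δ₀ i| ≤ ε := abs_smul_signVector_apply_le _ hε
  have hinner : ⟪gradient f x, δ₀⟫ = ε * ∑ i, |gradient f x i| := by
    rw [inner_smul_right, inner_signVector]
  have lower : ε * (∑ i, |gradient f x i|) - L / 2 * n * ε ^ 2 ≤ |f (x + δ₀) - f x| := by
    have h1 := abs_le.1 (taylor hδ₀)
    linarith [le_abs_self (f (x + δ₀) - f x)]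
  exact ⟨lower.trans (le_csSup ⟨_, upper⟩ ⟨δ₀, hδ₀, rfl⟩), csSup_le ⟨_, δ₀, hδ₀, rfl⟩ upper⟩
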